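/- Let n ≥ 0 and t ≥ 1, let P be a graded poset of rank n+1, and let R = Rees(P, T_{t,n+1}). Then μ(R) = Σ_{S ⊆ {1,…,n}} (−1)^{|S|} · v(S) · f_S(P). -/

import Mathlib

/-!
Philip Hall's theorem, sorted by rank sets: in a finite bounded poset with a strictly monotone
rank `ρ`, `μ(y, ⊤) = -∑_T (-1)^|T| c_T(y)`, where `c_T(y)` counts the chains above `y` whose
ranks form `T ⊆ (ρ y, ρ ⊤)`. This follows from `μ(y, ⊤) = -∑_{y < z ≤ ⊤} μ(z, ⊤)` by splitting
off the lowest rank of `T`.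

In the Rees product a chain with ranks `u₁ < ⋯ < u_k` lies over a chain of `P` with the same
ranks, and its words are chosen independently along it: `[u₁]` words at the bottom, and
`[u_{i+1} - u_i + 1]` extensions of the previous word at each later step. Hence
`c_U(0̂) = w(U) f_U(P)`, where `U ⊆ {1, …, n+1}` may contain the rank `n+1` of `1̂_P`. Splitting
the sum according to whether `n + 1 ∈ U` gives the weights `v(S) = w(S ∪ {n+1}) - w(S)`.
-/

/-- The `t`-analogue `[k] = 1 + t + ⋯ + t^(k-1)`. -/
def tnum (t k : ℕ) : ℕ := ∑ i ∈ Finset.range k, t ^ i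

/-- Auxiliary product defining the weight `w`: given the previous entry `p` and the
sorted list of remaining entries, multiply the factors `[s - p + 1]`. -/
def wAux (t : ℕ) : ℕ → List ℕ → ℕ
  | _, [] => 1
  | p, s :: rest => tnum t (s - p + 1) * wAux t s rest

/-- The weight `w(S) = [s₁]·[s₂-s₁+1]⋯[s_k-s_{k-1}+1]` for `S = {s₁ < ⋯ < s_k}`,
with `w(∅) = 1`. -/
def wWeight (t : ℕ) (S : Finset ℕ) : ℕ := wAux t 1 (S.sort (· ≤ ·))

/-- The weight `v(S) = w(S ∪ {n+1}) - w(S)` for nonempty `S ⊆ {1,…,n}`, and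
`v(∅) = t·[n]`. -/
def vWeight (t n : ℕ) (S : Finset ℕ) : ℤ :=
  if S = ∅ then t * tnum t n else (wWeight t (S ∪ {n + 1}) : ℤ) - (wWeight t S : ℤ)

/-- The flag `f`-vector entry `f_S` of a bounded poset with rank function `rk`:
the number of chains `⊥ < x₁ < ⋯ < x_k < ⊤` whose multiset of ranks is exactly `S`,
encoded as strictly increasing rank-respecting functions `S → β`. -/
noncomputable def flagF {β : Type} [PartialOrder β] [BoundedOrder β] (rk : β → ℕ) (S : Finset ℕ) : ℕ :=
  Nat.card {g : {s : ℕ // s ∈ S} → β //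
    (∀ s, rk (g s) = s.val) ∧
    (∀ s s' : {s : ℕ // s ∈ S}, s.val < s'.val → g s < g s') ∧
    (∀ s, ⊥ < g s ∧ g s < ⊤)}

/-- The proper part of the Rees product of a graded poset `(α, rk)` of rank `n+1`
with the `t`-ary tree `T_{t,n+1}`: pairs `(p, w)` with `p ≠ ⊥`, `w` a word of length
at most `n` over a `t`-letter alphabet, and `|w| ≤ rk p - 1`. -/
def ReesElt (α : Type) [PartialOrder α] [OrderBot α] (rk : α → ℕ) (t n : ℕ) : Type :=
  {pw : α × List (Fin t) // pw.1 ≠ ⊥ ∧ pw.2.length ≤ n ∧ pw.2.length + 1 ≤ rk pw.1}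

/-- The Rees order: `(p,w) ≤ (p',w')` iff `p ≤ p'`, `w` is a prefix of `w'`, and
`rk p' - rk p ≥ |w'| - |w|`. -/
instance (α : Type) [PartialOrder α] [OrderBot α] (rk : α → ℕ) (t n : ℕ) :
    PartialOrder (ReesElt α rk t n) where
  le a b := a.1.1 ≤ b.1.1 ∧ a.1.2 <+: b.1.2 ∧
    rk a.1.1 + b.1.2.length ≤ rk b.1.1 + a.1.2.length
  le_refl a := ⟨le_refl _, List.prefix_refl _, le_refl _⟩
  le_trans a b c hab hbc :=
    ⟨hab.1.trans hbc.1, hab.2.1.trans hbc.2.1, by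
      have h1 := hab.2.2; have h2 := hbc.2.2; omega⟩
  le_antisymm a b hab hba := by
    apply Subtype.ext
    have h1 : a.1.1 = b.1.1 := le_antisymm hab.1 hba.1
    have h2 : a.1.2 = b.1.2 := hab.2.1.eq_of_length_le hba.2.1.length_le
    exact Prod.ext h1 h2

/-- The Rees product `Rees(P, T_{t,n+1})`: the proper part together with an adjoined
minimum `⊥` and maximum `⊤`. -/
abbrev ReesTree (α : Type) [PartialOrder α] [OrderBot α] (rk : α → ℕ) (t n : ℕ) : Type :=
  WithBot (WithTop (ReesElt α rk t n))

/-- The rank function of `Rees(P, T_{t,n+1})`: `ρ(⊥) = 0`, `ρ(⊤) = n+2`, and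
`ρ(p,w) = rk p`. -/
noncomputable def reesRank (α : Type) [PartialOrder α] [OrderBot α] (rk : α → ℕ) (t n : ℕ) :
    ReesTree α rk t n → ℕ :=
  WithBot.recBotCoe 0 (WithTop.recTopCoe (n + 2) (fun a => rk a.1.1))

open Finset

theorem Finset.sum_powerset_eq_add_sum_min {α M : Type*} [LinearOrder α] [AddCommMonoid M]
    (I : Finset α) (f : Finset α → M) :
    ∑ T ∈ I.powerset, f T = f ∅ + ∑ s ∈ I, ∑ T ∈ (I.filter (s < ·)).powerset, f (insert s T) := by
  induction I using Finset.induction_on_max generalizing f with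
  | empty => simp
  | insert m J hJ ih =>
    have hm : m ∉ J := fun h => lt_irrefl m (hJ m h)
    have hinner : ∀ s ∈ J, ∑ T ∈ ((insert m J).filter (s < ·)).powerset, f (insert s T) =
        ∑ T ∈ (J.filter (s < ·)).powerset, f (insert s T) +
          ∑ T ∈ (J.filter (s < ·)).powerset, f (insert m (insert s T)) := by
      intro s hs
      rw [filter_insert, if_pos (hJ s hs), sum_powerset_insert fun h => hm (mem_filter.1 h).1]
      simp only [insert_comm m]
    have hnone : (insert m J).filter (m < ·) = ∅ :=
      filter_eq_empty_iff.2 fun x hx => by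
        rcases mem_insert.1 hx with rfl | hx
        · exact lt_irrefl x
        · exact (hJ x hx).not_gt
    rw [sum_powerset_insert hm, ih f, ih (fun T => f (insert m T)), sum_insert hm, hnone,
      sum_congr rfl hinner, sum_add_distrib]
    simp only [powerset_empty, sum_singleton, insert_empty_eq]
    abel

theorem Finset.sum_comp_of_card_fiber {ι κ M : Type*} [DecidableEq κ] [AddCommMonoid M]
    {s : Finset ι} {t : Finset κ} {g : ι → κ} (hg : ∀ i ∈ s, g i ∈ t) {c : ℕ}
    (hc : ∀ j ∈ t, #{i ∈ s | g i = j} = c) (f : κ → M) :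
    ∑ i ∈ s, f (g i) = c • ∑ j ∈ t, f j := by
  rw [← sum_fiberwise_of_maps_to hg, smul_sum]
  refine sum_congr rfl fun j hj => ?_
  rw [sum_congr rfl fun i hi => by rw [(mem_filter.1 hi).2], sum_const, hc j hj]

section Moebius

variable {β : Type*} [PartialOrder β] [LocallyFiniteOrder β] [DecidableEq β]

theorem eq_incidenceAlgebra_mu [WellFoundedLT β] (mu : β → β → ℤ) (h_refl : ∀ x, mu x x = 1)
    (h_sum : ∀ x y, x < y → ∑ z ∈ Icc x y, mu x z = 0) {x y : β} (hxy : x ≤ y) :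
    mu x y = IncidenceAlgebra.mu ℤ x y := by
  induction y using WellFoundedLT.induction with
  | _ y ih =>
  rcases hxy.eq_or_lt with rfl | hlt
  · simp [h_refl]
  have h_mu := IncidenceAlgebra.sum_Icc_mu_right (𝕜 := ℤ) x y
  have h_mu' := h_sum x y hlt
  rw [if_neg hlt.ne] at h_mu
  rw [← Ico_insert_right hlt.le, sum_insert (by simp)] at h_mu h_mu'
  have : ∑ z ∈ Ico x y, mu x z = ∑ z ∈ Ico x y, IncidenceAlgebra.mu ℤ x z :=
    sum_congr rfl fun z hz => ih z (mem_Ico.1 hz).2 (mem_Ico.1 hz).1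
  linarith

end Moebius

section Chains

variable {β : Type*} [PartialOrder β] (ρ : β → ℕ)

def RankedChain (S : Finset ℕ) (x : β) : Type _ :=
  {g : S → β // (∀ s, ρ (g s) = s) ∧ (∀ s s' : S, s.val < s'.val → g s < g s') ∧ ∀ s, x < g s}

noncomputable def chainCount (S : Finset ℕ) (x : β) : ℕ := Nat.card (RankedChain ρ S x)

instance [Finite β] (S : Finset ℕ) (x : β) : Finite (RankedChain ρ S x) :=
  Subtype.finite

theorem chainCount_empty (x : β) : chainCount ρ ∅ x = 1 := by
  have hS : IsEmpty (∅ : Finset ℕ) := ⟨fun s => notMem_empty _ s.2⟩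
  rw [chainCount, Nat.card_eq_one_iff_unique]
  exact ⟨⟨fun _ _ => Subtype.ext (funext hS.elim)⟩,
    ⟨⟨hS.elim, hS.elim, fun s => hS.elim s, hS.elim⟩⟩⟩

variable {ρ} in
def RankedChain.insertEquiv {s : ℕ} {T : Finset ℕ} (hs : ∀ u ∈ T, s < u) (x : β) :
    RankedChain ρ (insert s T) x ≃ Σ y : {y // x < y ∧ ρ y = s}, RankedChain ρ T y where
  toFun g := ⟨⟨g.1 ⟨s, mem_insert_self s T⟩, g.2.2.2 _, g.2.1 _⟩,
    ⟨fun u => g.1 ⟨u, mem_insert_of_mem u.2⟩, fun u => g.2.1 _,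
      fun u u' h => g.2.2.1 _ _ h, fun u => g.2.2.1 _ _ (hs u u.2)⟩⟩
  invFun p := ⟨fun u => if h : u.1 = s then p.1.1 else p.2.1 ⟨u, (mem_insert.1 u.2).resolve_left h⟩,
    by
      intro u
      dsimp only
      split_ifs with h
      · rw [p.1.2.2, h]
      · exact p.2.2.1 _,
    by
      intro u u' huu'
      have hu' : u'.1 ≠ s := by
        rintro h
        rcases mem_insert.1 u.2 with hu | hu
        · omega
        · have := hs _ hu; omega
      by_cases hu : u.1 = s
      · simp only [hu, hu', dite_true, dite_false]
        exact p.2.2.2.2 _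
      · simp only [hu, hu', dite_false]
        exact p.2.2.2.1 _ _ huu',
    by
      intro u
      dsimp only
      split_ifs
      · exact p.1.2.1
      · exact p.1.2.1.trans (p.2.2.2.2 _)⟩
  left_inv _ := Subtype.ext <| funext fun u => by
    by_cases h : u.1 = s
    · have : u = ⟨s, mem_insert_self s T⟩ := Subtype.ext h
      subst this
      simp
    · simp [h]
  right_inv p := Sigma.subtype_ext (Subtype.ext (by simp)) <|
    funext fun u => by simp [(hs u u.2).ne']

theorem chainCount_insert [Fintype β] [DecidableLT β] {s : ℕ} {T : Finset ℕ}
    (hs : ∀ u ∈ T, s < u) (x : β) :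
    chainCount ρ (insert s T) x = ∑ y with x < y ∧ ρ y = s, chainCount ρ T y := by
  rw [chainCount, Nat.card_congr (RankedChain.insertEquiv hs x), Nat.card_sigma,
    sum_subtype _ (p := fun y => x < y ∧ ρ y = s) (by simp)]
  rfl

end Chains

section Hall

variable {β : Type*} [PartialOrder β] [Fintype β] [DecidableLT β] [OrderTop β] (ρ : β → ℕ)

noncomputable def alternatingChainSum (y : β) : ℤ :=
  ∑ T ∈ (Ioo (ρ y) (ρ ⊤)).powerset, (-1) ^ #T * (chainCount ρ T y : ℤ)

theorem alternatingChainSum_insert_min {y : β} {s : ℕ} (hs : s ∈ Ioo (ρ y) (ρ ⊤)) :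
    ∑ T ∈ ((Ioo (ρ y) (ρ ⊤)).filter (s < ·)).powerset,
        (-1) ^ #(insert s T) * (chainCount ρ (insert s T) y : ℤ) =
      -∑ z with y < z ∧ ρ z = s, alternatingChainSum ρ z := by
  have hfilter : (Ioo (ρ y) (ρ ⊤)).filter (s < ·) = Ioo s (ρ ⊤) := by
    ext u
    simp only [mem_filter, mem_Ioo] at hs ⊢
    omega
  rw [hfilter]
  calc ∑ T ∈ (Ioo s (ρ ⊤)).powerset, (-1) ^ #(insert s T) * (chainCount ρ (insert s T) y : ℤ)
      = ∑ T ∈ (Ioo s (ρ ⊤)).powerset, ∑ z with y < z ∧ ρ z = s,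
          -((-1) ^ #T * (chainCount ρ T z : ℤ)) := by
        refine sum_congr rfl fun T hT => ?_
        have hT : ∀ u ∈ T, s < u := fun u hu => (mem_Ioo.1 (mem_powerset.1 hT hu)).1
        rw [card_insert_of_notMem fun h => lt_irrefl s (hT s h), chainCount_insert ρ hT,
          Nat.cast_sum, mul_sum]
        exact sum_congr rfl fun z _ => by ring
    _ = -∑ z with y < z ∧ ρ z = s, alternatingChainSum ρ z := by
        rw [sum_comm, ← sum_neg_distrib]
        refine sum_congr rfl fun z hz => ?_
        rw [alternatingChainSum, (mem_filter.1 hz).2.2, sum_neg_distrib]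

variable {ρ} [LocallyFiniteOrder β]

theorem alternatingChainSum_eq_one_sub (hρ : StrictMono ρ) (y : β) :
    alternatingChainSum ρ y = 1 - ∑ z ∈ Ioo y ⊤, alternatingChainSum ρ z := by
  have hfiber : ∀ s ∈ Ioo (ρ y) (ρ ⊤),
      ({z | y < z ∧ ρ z = s} : Finset β) = {z ∈ Ioo y ⊤ | ρ z = s} := by
    intro s hs
    ext z
    simp only [mem_filter, mem_univ, true_and, mem_Ioo, lt_top_iff_ne_top]
    constructor
    · rintro ⟨hyz, rfl⟩
      exact ⟨⟨hyz, by rintro rfl; exact (mem_Ioo.1 hs).2.false⟩, rfl⟩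
    · rintro ⟨⟨hyz, -⟩, rfl⟩
      exact ⟨hyz, rfl⟩
  have hmaps : ∀ z ∈ Ioo y ⊤, ρ z ∈ Ioo (ρ y) (ρ ⊤) := fun z hz =>
    mem_Ioo.2 ⟨hρ (mem_Ioo.1 hz).1, hρ (mem_Ioo.1 hz).2⟩
  rw [alternatingChainSum, sum_powerset_eq_add_sum_min,
    sum_congr rfl fun s hs => alternatingChainSum_insert_min ρ hs,
    sum_neg_distrib, sum_congr rfl fun s hs => by rw [hfiber s hs],
    sum_fiberwise_of_maps_to hmaps]
  simp [chainCount_empty, sub_eq_add_neg]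

theorem incidenceAlgebra_mu_top_eq [DecidableEq β] (hρ : StrictMono ρ) {y : β} (hy : y ≠ ⊤) :
    IncidenceAlgebra.mu ℤ y ⊤ = -alternatingChainSum ρ y := by
  induction y using WellFoundedGT.induction with
  | _ y ih =>
  rw [IncidenceAlgebra.mu_eq_neg_sum_Ioc_of_ne hy, ← Ioo_insert_right (lt_top_iff_ne_top.2 hy),
    sum_insert (by simp), IncidenceAlgebra.mu_self, alternatingChainSum_eq_one_sub hρ y,
    sum_congr rfl fun z hz => ih z (mem_Ioo.1 hz).1 (mem_Ioo.1 hz).2.ne, sum_neg_distrib]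
  ring

end Hall

section Weights

theorem wAux_sort_insert (t p : ℕ) {s : ℕ} {T : Finset ℕ} (hs : ∀ u ∈ T, s < u) :
    wAux t p ((insert s T).sort (· ≤ ·)) = tnum t (s - p + 1) * wAux t s (T.sort (· ≤ ·)) := by
  rw [sort_insert _ (fun u hu => (hs u hu).le) fun h => lt_irrefl s (hs s h)]
  rfl

theorem vWeight_eq_sub (t n : ℕ) (S : Finset ℕ) :
    vWeight t n S = wWeight t (insert (n + 1) S) - wWeight t S := by
  rw [vWeight]
  split_ifs with h
  · subst h
    simp [wWeight, wAux, tnum, geom_sum_succ]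
  · rw [union_comm, ← insert_eq]

end Weights

section Graded

variable {α : Type} [PartialOrder α] [BoundedOrder α] {rk : α → ℕ} {n : ℕ}

theorem rank_le_of_top (hrk : Monotone rk) (htop : rk ⊤ = n + 1) (x : α) : rk x ≤ n + 1 :=
  htop ▸ hrk le_top

theorem eq_top_of_rank_eq (hrk : StrictMono rk) (htop : rk ⊤ = n + 1) {x : α}
    (hx : rk x = n + 1) : x = ⊤ :=
  not_lt_top_iff.1 fun h => (hrk h).ne (hx.trans htop.symm)

theorem ne_top_of_rank_le (htop : rk ⊤ = n + 1) {x : α} (hx : rk x ≤ n) : x ≠ ⊤ := by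
  rintro rfl
  omega

theorem flagF_eq_chainCount (htop : rk ⊤ = n + 1) {S : Finset ℕ} (hS : S ⊆ Icc 1 n) :
    flagF rk S = chainCount rk S ⊥ := by
  refine Nat.card_congr (Equiv.subtypeEquivRight fun g => ?_)
  refine and_congr_right fun hg => and_congr_right fun _ => forall_congr' fun s => ?_
  refine and_iff_left (lt_top_iff_ne_top.2 (ne_top_of_rank_le htop ?_))
  rw [hg]
  exact (mem_Icc.1 (hS s.2)).2

variable [Fintype α] [DecidableLT α]

theorem chainCount_insert_top (hrk : StrictMono rk) (htop : rk ⊤ = n + 1) {S : Finset ℕ}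
    (hS : ∀ s ∈ S, s ≤ n) {x : α} (hx : x ≠ ⊤) :
    chainCount rk (insert (n + 1) S) x = chainCount rk S x := by
  induction S using Finset.induction_on_min generalizing x with
  | empty =>
    have hfilter : ({y | x < y ∧ rk y = n + 1} : Finset α) = {⊤} := by
      ext y
      simp only [mem_filter, mem_univ, true_and, mem_singleton]
      constructor
      · exact fun h => eq_top_of_rank_eq hrk htop h.2
      · rintro rfl
        exact ⟨lt_top_iff_ne_top.2 hx, htop⟩
    rw [chainCount_insert rk (by simp), hfilter, sum_singleton, chainCount_empty, chainCount_empty]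
  | insert s S hs ih =>
    have hsn : s ≤ n := hS s (mem_insert_self s S)
    rw [insert_comm, chainCount_insert rk, chainCount_insert rk hs]
    · refine sum_congr rfl fun y hy => ih (fun u hu => hS u (mem_insert_of_mem hu)) ?_
      exact ne_top_of_rank_le htop ((mem_filter.1 hy).2.2.le.trans hsn)
    · intro u hu
      rcases mem_insert.1 hu with rfl | hu
      · omega
      · exact hs u hu

theorem neg_sum_wWeight_chainCount (t : ℕ) (hrk : StrictMono rk) (hbot : rk ⊥ = 0)
    (htop : rk ⊤ = n + 1) :
    -∑ U ∈ (Icc 1 (n + 1)).powerset, (-1) ^ #U * ((wWeight t U * chainCount rk U ⊥ : ℕ) : ℤ) =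
      ∑ S ∈ (Icc 1 n).powerset, (-1) ^ #S * vWeight t n S * (flagF rk S : ℤ) := by
  have hIcc : Icc 1 (n + 1) = insert (n + 1) (Icc 1 n) := by
    ext u
    simp only [mem_Icc, mem_insert]
    omega
  rw [hIcc, sum_powerset_insert (by simp), ← sum_add_distrib, ← sum_neg_distrib]
  refine sum_congr rfl fun S hS => ?_
  have hS : S ⊆ Icc 1 n := mem_powerset.1 hS
  have hnS : n + 1 ∉ S := fun h => by simpa using hS h
  rw [card_insert_of_notMem hnS, chainCount_insert_top hrk htop
      (fun s hs => (mem_Icc.1 (hS hs)).2) (ne_top_of_rank_le htop (hbot ▸ Nat.zero_le n)),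
    ← flagF_eq_chainCount htop hS, vWeight_eq_sub]
  push_cast
  ring

end Graded

theorem Nat.card_lists_length_le (t d : ℕ) :
    Nat.card {z : List (Fin t) // z.length ≤ d} = tnum t (d + 1) := by
  let e : {z : List (Fin t) // z.length ≤ d} ≃ Σ k : Fin (d + 1), List.Vector (Fin t) k :=
    { toFun := fun z => ⟨⟨z.1.length, Nat.lt_succ_of_le z.2⟩, ⟨z.1, rfl⟩⟩
      invFun := fun v => ⟨v.2.1, by rw [v.2.2]; exact Nat.le_of_lt_succ v.1.2⟩
      left_inv := fun _ => rfl
      right_inv := fun ⟨⟨_, _⟩, _, h⟩ => by simp only at h; subst h; rfl }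
  rw [Nat.card_congr e, Nat.card_eq_fintype_card, Fintype.card_sigma]
  simp [tnum, Fin.sum_univ_eq_sum_range (fun k => t ^ k)]

theorem Nat.card_prefix_extensions {t : ℕ} (w₀ : List (Fin t)) (d : ℕ) :
    Nat.card {w : List (Fin t) // w₀ <+: w ∧ w.length ≤ w₀.length + d} = tnum t (d + 1) := by
  rw [← Nat.card_lists_length_le]
  refine Nat.card_congr
    { toFun := fun w => ⟨w.1.drop w₀.length, by simp; omega⟩
      invFun := fun z => ⟨w₀ ++ z.1, List.prefix_append _ _, by simp; omega⟩
      left_inv := fun ⟨w, hw, _⟩ => Subtype.ext ?_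
      right_inv := fun z => Subtype.ext (List.drop_left ..) }
  obtain ⟨z, rfl⟩ := hw
  simp

section Rees

variable {α : Type} [PartialOrder α] [BoundedOrder α] {rk : α → ℕ} {t n : ℕ}

def ReesElt.toTree (a : ReesElt α rk t n) : ReesTree α rk t n := WithBot.some (WithTop.some a)

@[simp]
theorem ReesElt.toTree_lt_toTree {a b : ReesElt α rk t n} : a.toTree < b.toTree ↔ a < b := by
  simp [ReesElt.toTree]

@[simp]
theorem ReesElt.bot_lt_toTree (a : ReesElt α rk t n) : ⊥ < a.toTree := WithBot.bot_lt_coe _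

theorem reesRank_top : reesRank α rk t n ⊤ = n + 2 := rfl

@[simp]
theorem ReesElt.reesRank_toTree (a : ReesElt α rk t n) :
    reesRank α rk t n a.toTree = rk a.1.1 := rfl

theorem ReesElt.lt_iff_of_fst_lt {a b : ReesElt α rk t n} (h : a.1.1 < b.1.1) :
    a < b ↔ a.1.2 <+: b.1.2 ∧ rk a.1.1 + b.1.2.length ≤ rk b.1.1 + a.1.2.length := by
  rw [lt_iff_le_and_ne, and_iff_left fun hab => h.ne (congrArg (·.1.1) hab)]
  exact and_iff_right h.le

theorem ReesElt.rk_lt_rk (hrk : StrictMono rk) {a b : ReesElt α rk t n} (h : a < b) :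
    rk a.1.1 < rk b.1.1 := by
  obtain ⟨hle, hpre, hlen⟩ := h.le
  refine hrk (hle.lt_of_ne fun heq => h.ne (Subtype.ext (Prod.ext heq ?_)))
  rw [heq] at hlen
  exact hpre.eq_of_length (le_antisymm hpre.length_le (by omega))

theorem strictMono_reesRank (hrk : StrictMono rk) (htop : rk ⊤ = n + 1) :
    StrictMono (reesRank α rk t n) := by
  refine WithBot.strictMono_iff.2 ⟨WithTop.strictMono_iff.2 ⟨fun a b h => ?_, fun a => ?_⟩,
    fun a => ?_⟩
  · exact ReesElt.rk_lt_rk hrk h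
  · exact Nat.lt_succ_of_le (rank_le_of_top hrk.monotone htop a.1.1)
  · induction a using WithTop.recTopCoe with
    | top => exact Nat.succ_pos _
    | coe a =>
      exact (Nat.zero_le _).trans_lt (hrk (bot_lt_iff_ne_bot.2 a.2.1))

variable [Fintype α]

instance : Finite (ReesElt α rk t n) :=
  have := (List.finite_length_le (Fin t) n).to_subtype
  Finite.of_injective
    (fun a : ReesElt α rk t n =>
      ((a.1.1, ⟨a.1.2, a.2.2.1⟩) : α × {l : List (Fin t) | l.length ≤ n}))
    fun a b h => by
      simp only [Prod.mk.injEq, Subtype.mk.injEq] at h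
      exact Subtype.ext (Prod.ext h.1 h.2)

noncomputable instance : Fintype (ReesElt α rk t n) := Fintype.ofFinite _

theorem sum_filter_reesTree {M : Type*} [AddCommMonoid M] {p : ReesTree α rk t n → Prop}
    [DecidablePred p] (hbot : ¬p ⊥) (htop : ¬p ⊤) (f : ReesTree α rk t n → M) :
    ∑ z with p z, f z = ∑ a : ReesElt α rk t n with p a.toTree, f a.toTree := by
  rw [sum_filter, sum_filter]
  change ∑ z : Option (Option (ReesElt α rk t n)), _ = _
  rw [Fintype.sum_option, Fintype.sum_option]
  show (if p ⊥ then f ⊥ else 0) + ((if p ⊤ then f ⊤ else 0) + _) = _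
  rw [if_neg hbot, if_neg htop, zero_add, zero_add]
  rfl

variable [DecidableEq α]

instance : DecidableEq (ReesElt α rk t n) := inferInstanceAs (DecidableEq (Subtype _))

/-- `(w₀, r)` are the word and rank of the element below the fibre; `([], 1)` plays this role
for `0̂`. -/
theorem card_reesElt_fiber {q : α} (hq : q ≠ ⊥) (hqn : rk q ≤ n + 1) {w₀ : List (Fin t)} {r : ℕ}
    (hw₀ : w₀.length < r) (hr : r ≤ rk q) :
    #{b : ReesElt α rk t n | b.1.1 = q ∧ w₀ <+: b.1.2 ∧ r + b.1.2.length ≤ rk q + w₀.length} =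
      tnum t (rk q - r + 1) := by
  rw [← Fintype.card_subtype, ← Nat.card_eq_fintype_card,
    ← Nat.card_prefix_extensions w₀ (rk q - r)]
  refine Nat.card_congr
    { toFun := fun b => ⟨b.1.1.2, b.2.2.1, by have := b.2.2.2; omega⟩
      invFun := fun w =>
        have := w.2.2
        ⟨⟨(q, w.1), hq, show w.1.length ≤ n by omega, show w.1.length + 1 ≤ rk q by omega⟩, rfl,
          w.2.1, show r + w.1.length ≤ rk q + w₀.length by omega⟩
      left_inv := fun ⟨b, hb, _⟩ => Subtype.ext (Subtype.ext (Prod.ext hb.symm rfl))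
      right_inv := fun _ => rfl }

theorem ReesElt.card_fst_eq (hrk : StrictMono rk) (htop : rk ⊤ = n + 1) {q : α} (hq : ⊥ < q) :
    #{b : ReesElt α rk t n | b.1.1 = q} = tnum t (rk q) := by
  have := hrk hq
  rw [← Nat.sub_add_cancel (by omega : 1 ≤ rk q), ← card_reesElt_fiber (w₀ := []) hq.ne'
    (rank_le_of_top hrk.monotone htop q) Nat.zero_lt_one (by omega)]
  refine congrArg card (filter_congr fun b _ => ⟨fun hbq => ⟨hbq, List.nil_prefix, ?_⟩, And.left⟩)
  have := b.2.2.2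
  simp only [List.length_nil, ← hbq]
  omega

variable [DecidableLE α]

instance : DecidableLE (ReesElt α rk t n) := fun a b =>
  inferInstanceAs (Decidable (a.1.1 ≤ b.1.1 ∧ a.1.2 <+: b.1.2 ∧ _))

instance : DecidableLT (ReesElt α rk t n) := decidableLTOfDecidableLE

noncomputable instance : LocallyFiniteOrder (ReesTree α rk t n) := Fintype.toLocallyFiniteOrder

theorem ReesElt.card_lt_fst_eq (hrk : StrictMono rk) (htop : rk ⊤ = n + 1) (a : ReesElt α rk t n)
    {q : α} (haq : a.1.1 < q) :
    #{b : ReesElt α rk t n | a < b ∧ b.1.1 = q} = tnum t (rk q - rk a.1.1 + 1) := by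
  rw [← card_reesElt_fiber (bot_le.trans_lt haq).ne' (rank_le_of_top hrk.monotone htop q)
    (Nat.lt_of_succ_le a.2.2.2) (hrk haq).le]
  refine congrArg card (filter_congr fun b _ => ⟨?_, ?_⟩)
  · rintro ⟨hab, rfl⟩
    exact ⟨rfl, (ReesElt.lt_iff_of_fst_lt haq).1 hab⟩
  · rintro ⟨rfl, h⟩
    exact ⟨(ReesElt.lt_iff_of_fst_lt haq).2 h, rfl⟩

end Rees

section ReesChains

variable {α : Type} [PartialOrder α] [BoundedOrder α] [Fintype α] [DecidableEq α] [DecidableLE α]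
  [DecidableLT α] {rk : α → ℕ} {t n : ℕ}

theorem chainCount_reesRank_toTree (hrk : StrictMono rk) (htop : rk ⊤ = n + 1)
    {T : Finset ℕ} (a : ReesElt α rk t n) (hT : ∀ u ∈ T, rk a.1.1 < u ∧ u ≤ n + 1) :
    chainCount (reesRank α rk t n) T a.toTree =
      wAux t (rk a.1.1) (T.sort (· ≤ ·)) * chainCount rk T a.1.1 := by
  induction T using Finset.induction_on_min generalizing a with
  | empty => simp [chainCount_empty, wAux]
  | insert s T hs ih =>
    have hsn : s ≤ n + 1 := (hT s (mem_insert_self s T)).2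
    rw [chainCount_insert _ hs, chainCount_insert _ hs, wAux_sort_insert t _ hs,
      sum_filter_reesTree (by simp) (by simp only [reesRank_top]; omega)]
    simp only [ReesElt.toTree_lt_toTree, ReesElt.reesRank_toTree]
    have hchain : ∀ b ∈ ({b | a < b ∧ rk b.1.1 = s} : Finset (ReesElt α rk t n)),
        chainCount (reesRank α rk t n) T b.toTree =
          wAux t s (T.sort (· ≤ ·)) * chainCount rk T b.1.1 := by
      intro b hb
      obtain ⟨-, hbs⟩ := (mem_filter.1 hb).2
      rw [ih b fun u hu => ⟨hbs ▸ hs u hu, (hT u (mem_insert_of_mem hu)).2⟩, hbs]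
    have hmaps : ∀ b ∈ ({b | a < b ∧ rk b.1.1 = s} : Finset (ReesElt α rk t n)),
        b.1.1 ∈ ({q | a.1.1 < q ∧ rk q = s} : Finset α) := by
      intro b hb
      obtain ⟨hab, hbs⟩ := (mem_filter.1 hb).2
      exact mem_filter.2 ⟨mem_univ _, hab.le.1.lt_of_ne fun h =>
        (ReesElt.rk_lt_rk hrk hab).ne (congrArg rk h), hbs⟩
    have hcard : ∀ q ∈ ({q | a.1.1 < q ∧ rk q = s} : Finset α),
        #{b ∈ ({b | a < b ∧ rk b.1.1 = s} : Finset (ReesElt α rk t n)) | b.1.1 = q} =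
          tnum t (s - rk a.1.1 + 1) := by
      intro q hq
      obtain ⟨haq, rfl⟩ := (mem_filter.1 hq).2
      rw [filter_filter, ← ReesElt.card_lt_fst_eq hrk htop a haq]
      exact congrArg card (filter_congr fun b _ => by
        constructor
        · exact fun ⟨⟨hab, _⟩, hbq⟩ => ⟨hab, hbq⟩
        · rintro ⟨hab, rfl⟩
          exact ⟨⟨hab, rfl⟩, rfl⟩)
    rw [sum_congr rfl hchain, sum_comp_of_card_fiber hmaps hcard
      fun q => wAux t s (T.sort (· ≤ ·)) * chainCount rk T q, smul_eq_mul, ← mul_sum]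
    ring

theorem chainCount_reesRank_bot (hrk : StrictMono rk) (htop : rk ⊤ = n + 1)
    {T : Finset ℕ} (hT : ∀ u ∈ T, 1 ≤ u ∧ u ≤ n + 1) :
    chainCount (reesRank α rk t n) T ⊥ = wWeight t T * chainCount rk T ⊥ := by
  induction T using Finset.induction_on_min with
  | empty => simp [chainCount_empty, wWeight, wAux]
  | insert s T hs _ =>
    obtain ⟨hs1, hsn⟩ := hT s (mem_insert_self s T)
    rw [chainCount_insert _ hs, chainCount_insert _ hs, wWeight, wAux_sort_insert t 1 hs,
      sum_filter_reesTree (by simp) (by simp only [reesRank_top]; omega)]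
    simp only [ReesElt.bot_lt_toTree, true_and, ReesElt.reesRank_toTree]
    have hchain : ∀ b ∈ ({b | rk b.1.1 = s} : Finset (ReesElt α rk t n)),
        chainCount (reesRank α rk t n) T b.toTree =
          wAux t s (T.sort (· ≤ ·)) * chainCount rk T b.1.1 := by
      intro b hb
      have hbs : rk b.1.1 = s := (mem_filter.1 hb).2
      rw [chainCount_reesRank_toTree hrk htop b
        fun u hu => ⟨hbs ▸ hs u hu, (hT u (mem_insert_of_mem hu)).2⟩, hbs]
    have hmaps : ∀ b ∈ ({b | rk b.1.1 = s} : Finset (ReesElt α rk t n)),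
        b.1.1 ∈ ({q | ⊥ < q ∧ rk q = s} : Finset α) := fun b hb =>
      mem_filter.2 ⟨mem_univ _, bot_lt_iff_ne_bot.2 b.2.1, (mem_filter.1 hb).2⟩
    have hcard : ∀ q ∈ ({q | ⊥ < q ∧ rk q = s} : Finset α),
        #{b ∈ ({b | rk b.1.1 = s} : Finset (ReesElt α rk t n)) | b.1.1 = q} =
          tnum t (s - 1 + 1) := by
      intro q hq
      obtain ⟨hbq, rfl⟩ := (mem_filter.1 hq).2
      rw [filter_filter, Nat.sub_add_cancel hs1, ← ReesElt.card_fst_eq hrk htop hbq]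
      exact congrArg card (filter_congr fun b _ => by
        constructor
        · exact And.right
        · rintro rfl
          exact ⟨rfl, rfl⟩)
    rw [sum_congr rfl hchain, sum_comp_of_card_fiber hmaps hcard
      fun q => wAux t s (T.sort (· ≤ ·)) * chainCount rk T q, smul_eq_mul, ← mul_sum]
    ring

end ReesChains

theorem statement3_general (n t : ℕ)
    (α : Type) [Fintype α] [PartialOrder α] [BoundedOrder α]
    (rk : α → ℕ) (hbot : rk ⊥ = 0) (htop : rk ⊤ = n + 1)
    (hcov : ∀ x y : α, x ⋖ y → rk y = rk x + 1)
    (mu : ReesTree α rk t n → ReesTree α rk t n → ℤ)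
    (hmu_refl : ∀ x, mu x x = 1)
    (hmu_rec : ∀ x y : ReesTree α rk t n, x < y → ∑ᶠ z ∈ Set.Icc x y, mu x z = 0) :
    mu ⊥ ⊤ = ∑ S ∈ (Finset.Icc 1 n).powerset,
      (-1) ^ S.card * vWeight t n S * (flagF rk S : ℤ) := by
  classical
  have hrk : StrictMono rk := by
    let _ : LocallyFiniteOrder α := Fintype.toLocallyFiniteOrder
    exact (strictMono_iff_forall_covBy rk).2 fun x y h => by rw [hcov x y h]; omega
  have hmu : mu ⊥ ⊤ = IncidenceAlgebra.mu ℤ ⊥ ⊤ :=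
    eq_incidenceAlgebra_mu mu hmu_refl (fun x y h => by
      simpa only [← coe_Icc, finsum_mem_coe_finset] using hmu_rec x y h) bot_le
  have hranks : Ioo (reesRank α rk t n ⊥) (reesRank α rk t n ⊤) = Icc 1 (n + 1) := by
    ext u
    simp only [mem_Ioo, mem_Icc, reesRank_top]
    exact ⟨fun h => ⟨h.1, by omega⟩, fun h => ⟨h.1, by omega⟩⟩
  rw [hmu, incidenceAlgebra_mu_top_eq (strictMono_reesRank hrk htop) bot_ne_top,
    alternatingChainSum, hranks, ← neg_sum_wWeight_chainCount t hrk hbot htop]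
  refine congrArg _ (sum_congr rfl fun U hU => ?_)
  rw [chainCount_reesRank_bot hrk htop fun u hu => mem_Icc.1 (mem_powerset.1 hU hu), Nat.cast_mul]

theorem statement3 (n t : ℕ) (ht : 1 ≤ t)
    (α : Type) [Fintype α] [PartialOrder α] [BoundedOrder α]
    (rk : α → ℕ) (hbot : rk ⊥ = 0) (htop : rk ⊤ = n + 1)
    (hcov : ∀ x y : α, x ⋖ y → rk y = rk x + 1)
    (mu : ReesTree α rk t n → ReesTree α rk t n → ℤ)
    (hmu_refl : ∀ x, mu x x = 1)
    (hmu_rec : ∀ x y : ReesTree α rk t n, x < y → ∑ᶠ z ∈ Set.Icc x y, mu x z = 0) :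
    mu ⊥ ⊤ = ∑ S ∈ (Finset.Icc 1 n).powerset,
      (-1) ^ S.card * vWeight t n S * (flagF rk S : ℤ) :=
  statement3_general n t α rk hbot htop hcov mu hmu_refl hmu_rec
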